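/- For any r ≥ 0 and s, t > 0, the logarithmic mean satisfies r(θ₁(s,t) + θ₂(s,t)) − (θ(r,s) + θ(r,t)) ≥ −θ(s,t). -/

import Mathlib

/-- The logarithmic mean, extended by `θ(s,s) = s` and `θ(s,0) = θ(0,t) = 0`. -/
noncomputable def logMean (s t : ℝ) : ℝ :=
  if s = t then s else if s = 0 ∨ t = 0 then 0 else (s - t) / (Real.log s - Real.log t)

/-- Partial derivative of the logarithmic mean in the first variable. -/
noncomputable def logMean₁ (s t : ℝ) : ℝ := deriv (fun x => logMean x t) s

/-- Partial derivative of the logarithmic mean in the second variable. -/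
noncomputable def logMean₂ (s t : ℝ) : ℝ := deriv (fun y => logMean s y) t

/-! The logarithmic mean is the integral `θ(s,t) = ∫₀¹ s^a t^(1-a) da` of weighted geometric
means. Each integrand is concave in `s`, so `θ` lies below its tangent lines:
`θ(r,t) ≤ θ(s,t) + (r - s) θ₁(s,t)` and `θ(r,s) ≤ θ(s,t) + (r - t) θ₂(s,t)`. Adding the two and
using Euler's identity `s θ₁ + t θ₂ = θ` for the 1-homogeneous `θ` gives the inequality. -/

open Real Set Filter intervalIntegral

lemma logMean_comm (s t : ℝ) : logMean s t = logMean t s := by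
  rcases eq_or_ne s t with rfl | hst
  · rfl
  · simp only [logMean, if_neg hst, if_neg hst.symm, or_comm (a := t = 0)]
    rw [← neg_sub t s, ← neg_sub (log t), neg_div_neg_eq]

@[simp]
lemma logMean_zero_left (t : ℝ) : logMean 0 t = 0 := by
  simp [logMean]

lemma logMean₂_eq_logMean₁ (s t : ℝ) : logMean₂ s t = logMean₁ t s := by
  simp only [logMean₂, logMean₁, logMean_comm s]

lemma logMean_eq_integral {s t : ℝ} (hs : 0 < s) (ht : 0 < t) :
    logMean s t = ∫ a in (0 : ℝ)..1, s ^ a * t ^ (1 - a) := by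
  rcases eq_or_ne s t with rfl | hst
  · have h (a : ℝ) : s ^ a * s ^ (1 - a) = s := by
      rw [← rpow_add hs, add_sub_cancel, rpow_one]
    simp [logMean, h]
  · have hc : log s - log t ≠ 0 := sub_ne_zero.2 fun h => hst (log_injOn_pos hs ht h)
    have h (a : ℝ) : s ^ a * t ^ (1 - a) = t * exp ((log s - log t) * a) :=
      calc s ^ a * t ^ (1 - a) = exp (log t) * exp ((log s - log t) * a) := by
            rw [rpow_def_of_pos hs, rpow_def_of_pos ht, ← exp_add, ← exp_add]; ring_nf
        _ = t * exp ((log s - log t) * a) := by rw [exp_log ht]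
    have hexp : exp (log s - log t) = s / t := by rw [exp_sub, exp_log hs, exp_log ht]
    simp_rw [h]
    rw [integral_const_mul, integral_comp_mul_left (fun x => exp x) hc, integral_exp]
    simp only [mul_one, mul_zero, exp_zero, hexp, smul_eq_mul, logMean, if_neg hst,
      hs.ne', ht.ne', or_self, if_false]
    field_simp

lemma logMean_nonneg {s t : ℝ} (hs : 0 < s) (ht : 0 < t) : 0 ≤ logMean s t := by
  rw [logMean_eq_integral hs ht]
  exact integral_nonneg zero_le_one fun a _ => by positivity

lemma rpow_le_rpow_add_sub_mul {r s a : ℝ} (hr : 0 ≤ r) (hs : 0 < s) (ha₀ : 0 ≤ a)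
    (ha₁ : a ≤ 1) : r ^ a ≤ s ^ a + (r - s) * (a * s ^ a / s) := by
  have hamgm := geom_mean_le_arith_mean2_weighted ha₀ (sub_nonneg.2 ha₁) (div_nonneg hr hs.le)
    zero_le_one (add_sub_cancel a 1)
  rw [one_rpow, mul_one, mul_one, div_rpow hr hs.le, div_le_iff₀ (rpow_pos_of_pos hs a)] at hamgm
  calc r ^ a ≤ (a * (r / s) + (1 - a)) * s ^ a := hamgm
    _ = s ^ a + (r - s) * (a * s ^ a / s) := by field_simp; ring

lemma hasDerivAt_logMean_left {s t : ℝ} (hs : 0 < s) (ht : 0 < t) :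
    HasDerivAt (fun x => logMean x t) (∫ a in (0 : ℝ)..1, a * (s ^ a * t ^ (1 - a)) / s) s := by
  have hderiv (a : ℝ) {x : ℝ} (hx : 0 < x) :
      HasDerivAt (fun x => x ^ a * t ^ (1 - a)) (a * (x ^ a * t ^ (1 - a)) / x) x :=
    ((hasDerivAt_rpow_const (Or.inl hx.ne')).mul_const _).congr_deriv
      (by rw [rpow_sub_one hx.ne']; ring)
  have hbound (a : ℝ) (ha : a ∈ uIoc (0 : ℝ) 1) {x : ℝ} (hx : x ∈ Ioi (s / 2)) :
      ‖a * (x ^ a * t ^ (1 - a)) / x‖ ≤ 1 + 2 * t / s := by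
    -- weighted AM-GM gives `a x^a t^(1-a) ≤ x + t`, and `t / x < 2 t / s`
    rw [uIoc_of_le zero_le_one] at ha
    have hx₀ : 0 < x := (half_pos hs).trans hx
    have hamgm := geom_mean_le_arith_mean2_weighted ha.1.le (sub_nonneg.2 ha.2) hx₀.le ht.le
      (add_sub_cancel a 1)
    have hk : 0 ≤ x ^ a * t ^ (1 - a) := by positivity
    have htx : t ≤ 2 * t / s * x := by
      rw [div_mul_eq_mul_div, le_div_iff₀ hs]
      nlinarith [mem_Ioi.1 hx]
    rw [norm_of_nonneg (by have := ha.1; positivity), div_le_iff₀ hx₀]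
    nlinarith [ha.1, ha.2]
  obtain ⟨-, h⟩ := hasDerivAt_integral_of_dominated_loc_of_deriv_le
    (F := fun x a => x ^ a * t ^ (1 - a)) (bound := fun _ => 1 + 2 * t / s)
    (μ := MeasureTheory.volume)
    (Ioi_mem_nhds (half_lt_self hs))
    (eventually_gt_nhds hs |>.mono fun x hx =>
      Continuous.aestronglyMeasurable (by fun_prop (disch := positivity)))
    (Continuous.intervalIntegrable (by fun_prop (disch := positivity)) 0 1)
    (Continuous.aestronglyMeasurable (by fun_prop (disch := positivity)))
    (.of_forall hbound) intervalIntegrable_const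
    (.of_forall fun a _ x hx => hderiv a ((half_pos hs).trans hx))
  refine h.congr_of_eventuallyEq ?_
  filter_upwards [eventually_gt_nhds hs] with x hx using logMean_eq_integral hx ht

lemma logMean₁_eq_integral {s t : ℝ} (hs : 0 < s) (ht : 0 < t) :
    logMean₁ s t = ∫ a in (0 : ℝ)..1, a * (s ^ a * t ^ (1 - a)) / s :=
  (hasDerivAt_logMean_left hs ht).deriv

lemma mul_logMean₁_eq_integral {s t : ℝ} (hs : 0 < s) (ht : 0 < t) :
    s * logMean₁ s t = ∫ a in (0 : ℝ)..1, a * (s ^ a * t ^ (1 - a)) := by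
  rw [logMean₁_eq_integral hs ht, integral_div, mul_div_cancel₀ _ hs.ne']

lemma mul_logMean₁_add_mul_logMean₂ {s t : ℝ} (hs : 0 < s) (ht : 0 < t) :
    s * logMean₁ s t + t * logMean₂ s t = logMean s t := by
  have hflip : t * logMean₂ s t = ∫ a in (0 : ℝ)..1, (1 - a) * (s ^ a * t ^ (1 - a)) := by
    have h := integral_comp_sub_left (fun a => a * (t ^ a * s ^ (1 - a))) (1 : ℝ) (a := 0) (b := 1)
    simp only [sub_sub_cancel, sub_zero, sub_self] at h
    rw [logMean₂_eq_logMean₁, mul_logMean₁_eq_integral ht hs, ← h]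
    exact integral_congr fun a _ => by ring
  rw [mul_logMean₁_eq_integral hs ht, hflip, logMean_eq_integral hs ht, ← integral_add]
  · simp only [← add_mul, add_sub_cancel, one_mul]
  all_goals exact Continuous.intervalIntegrable (by fun_prop (disch := positivity)) _ _

lemma logMean_le_add_sub_mul_logMean₁ {r s t : ℝ} (hr : 0 < r) (hs : 0 < s) (ht : 0 < t) :
    logMean r t ≤ logMean s t + (r - s) * logMean₁ s t := by
  rw [logMean_eq_integral hr ht, logMean_eq_integral hs ht, logMean₁_eq_integral hs ht,
    ← integral_const_mul, ← integral_add]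
  · refine integral_mono_on zero_le_one ?_ ?_ fun a ha => ?_
    · exact Continuous.intervalIntegrable (by fun_prop (disch := positivity)) _ _
    · exact Continuous.intervalIntegrable (by fun_prop (disch := positivity)) _ _
    refine (mul_le_mul_of_nonneg_right (rpow_le_rpow_add_sub_mul hr.le hs ha.1 ha.2)
      (rpow_nonneg ht.le (1 - a))).trans_eq ?_
    ring
  all_goals exact Continuous.intervalIntegrable (by fun_prop (disch := positivity)) _ _

theorem logMean_key_inequality (r s t : ℝ) (hr : 0 ≤ r) (hs : 0 < s) (ht : 0 < t) :
    r * (logMean₁ s t + logMean₂ s t) - (logMean r s + logMean r t) ≥ - logMean s t := by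
  rcases hr.eq_or_lt with rfl | hr
  · simpa using logMean_nonneg hs ht
  have hs_tangent := logMean_le_add_sub_mul_logMean₁ hr hs ht
  have ht_tangent := logMean_le_add_sub_mul_logMean₁ hr ht hs
  rw [logMean_comm t s, ← logMean₂_eq_logMean₁] at ht_tangent
  linarith [mul_logMean₁_add_mul_logMean₂ hs ht]
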